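/- arXiv:2201.07923 — 5 statements merged into one kernel-verified Lean document; each statement's English description precedes it below -/
import Mathlib

section
/- Let d, N, N_L be natural numbers with N_L ≤ N and let ε, c be real numbers with 0 ≤ ε ≤ 1/4 and 0 ≤ c. For k = 1,…,N let B_k = blockdiag(1, M_k) be (1+d)×(1+d) real block-diagonal matrices with ‖M_k‖₂ ≤ 1 for all k and ‖M_k‖₂ ≤ 1 − 4ε for at least N_L indices k, and set R = B_N ⋯ B_1. Let v, w ∈ ℝ^{1+d} with the first coordinate of w equal to zero and ‖w‖‖v‖ ≤ 1, and let r̃ be a real number with |r̃| ≥ 1 − c. Then |wᵀ R v − r̃| ≥ 1 − c − exp(−4ε N_L). -/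
open scoped BigOperators
open Matrix

/-- Euclidean norm of a real vector. -/
noncomputable def euclNorm {ι : Type*} [Fintype ι] (v : ι → ℝ) : ℝ :=
  Real.sqrt (∑ i, v i ^ 2)

/-- Spectral norm (operator 2-norm, largest singular value) of a real square matrix. -/
noncomputable def specNorm {d : ℕ} (M : Matrix (Fin d) (Fin d) ℝ) : ℝ :=
  ‖LinearMap.toContinuousLinearMap (Matrix.toEuclideanLin M)‖

/-! Since the first coordinate of `w` vanishes and `R = blockdiag(1, P)` with
`P = M_N ⋯ M_1`, only the block `P` is seen: `wᵀ R v = w'ᵀ P v'` for the truncations `w', v'`.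
Cauchy–Schwarz and submultiplicativity of the spectral norm give
`|wᵀ R v| ≤ ‖P‖ ≤ ∏ ‖M_k‖ ≤ (1 - 4ε)^{N_L} ≤ exp(-4ε N_L)`, and the reverse triangle inequality
turns `|r̃| ≥ 1 - c` into the claimed lower bound. -/

open scoped Matrix.Norms.L2Operator

lemma specNorm_eq_l2_opNorm {d : ℕ} (M : Matrix (Fin d) (Fin d) ℝ) : specNorm M = ‖M‖ := rfl

lemma euclNorm_nonneg {ι : Type*} [Fintype ι] (v : ι → ℝ) : 0 ≤ euclNorm v :=
  Real.sqrt_nonneg _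

lemma euclNorm_eq_norm_toLp {ι : Type*} [Fintype ι] (v : ι → ℝ) :
    euclNorm v = ‖WithLp.toLp 2 v‖ := by
  simp [euclNorm, EuclideanSpace.norm_eq, Real.norm_eq_abs, sq_abs]

lemma euclNorm_comp_inr_le {m n : Type*} [Fintype m] [Fintype n] (v : m ⊕ n → ℝ) :
    euclNorm (v ∘ Sum.inr) ≤ euclNorm v := by
  unfold euclNorm
  gcongr
  rw [Fintype.sum_sum_type]
  exact le_add_of_nonneg_left (Finset.sum_nonneg fun i _ => sq_nonneg _)

lemma abs_dotProduct_mulVec_le {n : Type*} [Fintype n] [DecidableEq n]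
    (A : Matrix n n ℝ) (u x : n → ℝ) :
    |u ⬝ᵥ A *ᵥ x| ≤ euclNorm u * ‖A‖ * euclNorm x := by
  have h := inner_toEuclideanCLM A (WithLp.toLp 2 u) (WithLp.toLp 2 x)
  change _ = u ⬝ᵥ A *ᵥ x at h
  rw [euclNorm_eq_norm_toLp, euclNorm_eq_norm_toLp, mul_assoc, ← h]
  calc _ ≤ _ := abs_real_inner_le_norm _ _
    _ ≤ _ := mul_le_mul_of_nonneg_left ((toEuclideanCLM (𝕜 := ℝ) A).le_opNorm _) (norm_nonneg _)

lemma Matrix.l2_opNorm_one_le {n : Type*} [Fintype n] [DecidableEq n] :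
    ‖(1 : Matrix n n ℝ)‖ ≤ 1 := by
  rw [← l2_opNorm_toEuclideanCLM, map_one]
  exact ContinuousLinearMap.norm_id_le

lemma Matrix.l2_opNorm_list_prod_le {n : Type*} [Fintype n] [DecidableEq n]
    (L : List (Matrix n n ℝ)) : ‖L.prod‖ ≤ (L.map norm).prod := by
  rcases eq_or_ne L [] with rfl | hL
  · simpa using l2_opNorm_one_le
  · exact List.norm_prod_le' hL

lemma Matrix.dotProduct_fromBlocks_mulVec_of_inl_eq_zero {R m n : Type*} [Fintype m] [Fintype n]
    [NonUnitalNonAssocSemiring R] (A : Matrix m m R) (D : Matrix n n R) (v w : m ⊕ n → R)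
    (hw : ∀ i, w (Sum.inl i) = 0) :
    w ⬝ᵥ fromBlocks A 0 0 D *ᵥ v = (w ∘ Sum.inr) ⬝ᵥ D *ᵥ (v ∘ Sum.inr) := by
  simp [dotProduct, Fintype.sum_sum_type, fromBlocks_mulVec, hw]

lemma Matrix.list_prod_map_fromBlocks_one {R m n : Type*} [Fintype m] [DecidableEq m] [Fintype n]
    [DecidableEq n] [Semiring R] (L : List (Matrix n n R)) :
    (L.map (fromBlocks (1 : Matrix m m R) 0 0)).prod = fromBlocks 1 0 0 L.prod := by
  induction L with
  | nil => simp [fromBlocks_one]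
  | cons a t ih => simp [ih, fromBlocks_multiply]

lemma Finset.prod_le_pow_card_of_le_one {ι : Type*} [Fintype ι] [DecidableEq ι] (s : Finset ι)
    (f : ι → ℝ) (q : ℝ) (hf0 : ∀ i, 0 ≤ f i) (hf1 : ∀ i, f i ≤ 1) (hs : ∀ i ∈ s, f i ≤ q) :
    ∏ i, f i ≤ q ^ s.card := by
  rw [← s.prod_mul_prod_compl]
  calc _ ≤ ∏ i ∈ s, f i := mul_le_of_le_one_right (prod_nonneg fun i _ => hf0 i)
        (prod_le_one (fun i _ => hf0 i) fun i _ => hf1 i)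
    _ ≤ ∏ _i ∈ s, q := prod_le_prod (fun i _ => hf0 i) hs
    _ = q ^ s.card := prod_const q

lemma one_sub_pow_le_exp_neg_mul {x : ℝ} (hx : x ≤ 1) (n : ℕ) :
    (1 - x) ^ n ≤ Real.exp (-(x * n)) := by
  calc (1 - x) ^ n ≤ Real.exp (-x) ^ n :=
        pow_le_pow_left₀ (by linarith) (Real.one_sub_le_exp_neg x) n
    _ = Real.exp (-(x * n)) := by rw [← Real.exp_nat_mul]; ring_nf

theorem stmt1_general (d N NL : ℕ) (ε c : ℝ) (hε0 : 0 ≤ ε) (hε1 : ε ≤ 1 / 4)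
    (M : Fin N → Matrix (Fin d) (Fin d) ℝ)
    (hM1 : ∀ k, specNorm (M k) ≤ 1)
    (hMε : ∃ s : Finset (Fin N), NL ≤ s.card ∧ ∀ k ∈ s, specNorm (M k) ≤ 1 - 4 * ε)
    (B : Fin N → Matrix (Fin 1 ⊕ Fin d) (Fin 1 ⊕ Fin d) ℝ)
    (hB : ∀ k, B k = fromBlocks (1 : Matrix (Fin 1) (Fin 1) ℝ) 0 0 (M k))
    (R : Matrix (Fin 1 ⊕ Fin d) (Fin 1 ⊕ Fin d) ℝ)
    (hR : R = ((List.ofFn B).reverse).prod)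
    (v w : Fin 1 ⊕ Fin d → ℝ) (hw : w (Sum.inl 0) = 0)
    (hwv : euclNorm w * euclNorm v ≤ 1)
    (rt : ℝ) (hrt : 1 - c ≤ |rt|) :
    1 - c - Real.exp (-(4 * ε * NL)) ≤ |w ⬝ᵥ R.mulVec v - rt| := by
  obtain ⟨s, hcard, hs⟩ := hMε
  simp only [specNorm_eq_l2_opNorm] at hM1 hs
  set P := ((List.ofFn M).reverse).prod
  have hRP : R = fromBlocks 1 0 0 P := by
    have hBM : List.ofFn B = (List.ofFn M).map (fromBlocks 1 0 0) := by
      rw [List.map_ofFn]; exact congrArg List.ofFn (funext hB)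
    rw [hR, hBM, ← List.map_reverse, list_prod_map_fromBlocks_one]
  have hP : ‖P‖ ≤ Real.exp (-(4 * ε * NL)) :=
    calc ‖P‖ ≤ ∏ k, ‖M k‖ := (l2_opNorm_list_prod_le _).trans_eq <| by
          rw [List.map_reverse, List.prod_reverse, List.map_ofFn, List.prod_ofFn]; rfl
      _ ≤ (1 - 4 * ε) ^ s.card :=
          Finset.prod_le_pow_card_of_le_one s _ _ (fun k => norm_nonneg _) hM1 hs
      _ ≤ (1 - 4 * ε) ^ NL := pow_le_pow_of_le_one (by linarith) (by linarith) hcard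
      _ ≤ Real.exp (-(4 * ε * NL)) := one_sub_pow_le_exp_neg_mul (by linarith) NL
  have hwinl : ∀ i, w (Sum.inl i) = 0 := Fin.forall_fin_one.2 hw
  have hval : |w ⬝ᵥ R *ᵥ v| ≤ Real.exp (-(4 * ε * NL)) :=
    calc |w ⬝ᵥ R *ᵥ v| = |(w ∘ Sum.inr) ⬝ᵥ P *ᵥ (v ∘ Sum.inr)| := by
          rw [hRP, dotProduct_fromBlocks_mulVec_of_inl_eq_zero _ _ _ _ hwinl]
      _ ≤ euclNorm (w ∘ Sum.inr) * ‖P‖ * euclNorm (v ∘ Sum.inr) :=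
          abs_dotProduct_mulVec_le _ _ _
      _ ≤ euclNorm w * ‖P‖ * euclNorm v := by
          gcongr
          exacts [euclNorm_nonneg _, mul_nonneg (euclNorm_nonneg _) (norm_nonneg _),
            euclNorm_comp_inr_le w, euclNorm_comp_inr_le v]
      _ = ‖P‖ * (euclNorm w * euclNorm v) := by ring
      _ ≤ ‖P‖ := mul_le_of_le_one_right (norm_nonneg _) hwv
      _ ≤ Real.exp (-(4 * ε * NL)) := hP
  linarith [abs_sub_abs_le_abs_sub rt (w ⬝ᵥ R *ᵥ v), abs_sub_comm rt (w ⬝ᵥ R *ᵥ v)]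

/-- lower bound on the computational error: if the error-free result `r̃`
has magnitude at least `1 - c`, the noisy result `wᵀ R v` deviates from it by at least
`1 - c - exp(-4ε N_L)`. -/
theorem stmt1 (d N NL : ℕ) (hNL : NL ≤ N) (ε c : ℝ) (hε0 : 0 ≤ ε) (hε1 : ε ≤ 1 / 4)
    (hc : 0 ≤ c)
    (M : Fin N → Matrix (Fin d) (Fin d) ℝ)
    (hM1 : ∀ k, specNorm (M k) ≤ 1)
    (hMε : ∃ s : Finset (Fin N), NL ≤ s.card ∧ ∀ k ∈ s, specNorm (M k) ≤ 1 - 4 * ε)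
    (B : Fin N → Matrix (Fin 1 ⊕ Fin d) (Fin 1 ⊕ Fin d) ℝ)
    (hB : ∀ k, B k = fromBlocks (1 : Matrix (Fin 1) (Fin 1) ℝ) 0 0 (M k))
    (R : Matrix (Fin 1 ⊕ Fin d) (Fin 1 ⊕ Fin d) ℝ)
    (hR : R = ((List.ofFn B).reverse).prod)
    (v w : Fin 1 ⊕ Fin d → ℝ) (hw : w (Sum.inl 0) = 0)
    (hwv : euclNorm w * euclNorm v ≤ 1)
    (rt : ℝ) (hrt : 1 - c ≤ |rt|) :
    1 - c - Real.exp (-(4 * ε * NL)) ≤ |w ⬝ᵥ R.mulVec v - rt| :=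
  stmt1_general d N NL ε c hε0 hε1 M hM1 hMε B hB R hR v w hw hwv rt hrt
end

section
/- Let d, N be natural numbers, ε ∈ [0, 1] a real number, and M a d×d Hermitian complex matrix all of whose eigenvalues lie in [−1, 1]. Let ρ₀ be a d×d density matrix, let G₁,…,G_N be d×d unitary matrices, and for each k = 1,…,N let I_k be a finite index set, p_k : I_k → ℝ a probability vector with distinguished index 1 ∈ I_k satisfying p_k(1) ≥ 1 − ε, and S_{k,i} (i ∈ I_k) unitary matrices with S_{k,1} = I. Define recursively ρ_k = Σ_{i ∈ I_k} p_k(i) · S_{k,i} G_k ρ_{k−1} G_k† S_{k,i}†, and ρ̃_k = G_k ρ̃_{k−1} G_k† with ρ̃₀ = ρ₀. Then |Tr(M ρ_N) − Tr(M ρ̃_N)| ≤ 2(1 − (1 − ε)^N) ≤ 2 ε N. -/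
/-!
Let `q_k` be the product of the identity probabilities of the first `k` gates. Keeping only the
error-free branch of every noisy gate shows `q_k • ρ̃_k ≤ ρ_k` in the Loewner order, so
`ρ_N = q_N ρ̃_N + D` with `D ≥ 0` of trace `1 - q_N`. Since `-1 ≤ M ≤ 1`, `‖Tr(M A)‖ ≤ Tr A` for
every `A ≥ 0`, so the error is at most `‖Tr(M D)‖ + (1 - q_N) ‖Tr(M ρ̃_N)‖ ≤ 2 (1 - q_N)`, and
`q_N ≥ (1 - ε) ^ N`. Bernoulli's inequality gives the linear bound.
-/

open scoped BigOperators
open Matrix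
open scoped ComplexOrder MatrixOrder

lemma Complex.norm_le_re_of_neg_le_of_le {z a : ℂ} (h₁ : -a ≤ z) (h₂ : z ≤ a) : ‖z‖ ≤ a.re := by
  obtain ⟨hre₁, him₁⟩ := Complex.le_def.1 h₁
  obtain ⟨hre₂, him₂⟩ := Complex.le_def.1 h₂
  have him : z.im = 0 := by simp only [Complex.neg_im] at him₁; linarith
  rw [← Complex.re_add_im z, him, Complex.ofReal_zero, zero_mul, add_zero, Complex.norm_real,
    Real.norm_eq_abs, abs_le]
  simp only [Complex.neg_re] at hre₁
  exact ⟨hre₁, hre₂⟩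

namespace Matrix

variable {n : Type*} [Fintype n]

lemma trace_mono {A B : Matrix n n ℂ} (h : A ≤ B) : A.trace ≤ B.trace := by
  simpa [trace_sub] using (le_iff.1 h).trace_nonneg

def IsDensityMatrix (A : Matrix n n ℂ) : Prop := 0 ≤ A ∧ A.trace = 1

section MixedUnitary

variable {ι : Type*} [Fintype ι] (p : ι → ℝ) (U : ι → Matrix n n ℂ)

noncomputable def mixedUnitary (A : Matrix n n ℂ) : Matrix n n ℂ := ∑ i, p i • (U i * A * (U i)ᴴ)

variable {p U}

lemma smul_conj_le_mixedUnitary (hp : ∀ i, 0 ≤ p i) {A : Matrix n n ℂ} (hA : 0 ≤ A) (o : ι) :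
    p o • (U o * A * (U o)ᴴ) ≤ mixedUnitary p U A :=
  Finset.single_le_sum (f := fun i => p i • (U i * A * (U i)ᴴ))
    (fun i _ => smul_nonneg (hp i) (star_eq_conjTranspose (U i) ▸ star_right_conjugate_nonneg hA _))
    (Finset.mem_univ o)

lemma smul_le_mixedUnitary_of_smul_le (hp : ∀ i, 0 ≤ p i) {ρ σ : Matrix n n ℂ} (hρ : 0 ≤ ρ)
    {c : ℝ} (hle : c • σ ≤ ρ) (o : ι) :
    (c * p o) • (U o * σ * (U o)ᴴ) ≤ mixedUnitary p U ρ := calc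
  (c * p o) • (U o * σ * (U o)ᴴ) = p o • (U o * (c • σ) * (U o)ᴴ) := by
    rw [mul_comm, mul_smul, mul_smul_comm, smul_mul_assoc]
  _ ≤ p o • (U o * ρ * (U o)ᴴ) := by
    gcongr
    · exact hp o
    · simpa only [star_eq_conjTranspose] using star_right_conjugate_le_conjugate hle (U o)
  _ ≤ mixedUnitary p U ρ := smul_conj_le_mixedUnitary hp hρ o

end MixedUnitary

variable [DecidableEq n]

lemma trace_unitary_conj {U : Matrix n n ℂ} (hU : U ∈ unitaryGroup n ℂ) (A : Matrix n n ℂ) :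
    (U * A * Uᴴ).trace = A.trace := by
  rw [trace_mul_comm, ← mul_assoc, ← star_eq_conjTranspose, mem_unitaryGroup_iff'.mp hU, one_mul]

lemma IsDensityMatrix.unitary_conj {A U : Matrix n n ℂ} (hA : A.IsDensityMatrix)
    (hU : U ∈ unitaryGroup n ℂ) : (U * A * Uᴴ).IsDensityMatrix :=
  ⟨star_eq_conjTranspose U ▸ star_right_conjugate_nonneg hA.1 U,
    (trace_unitary_conj hU A).trans hA.2⟩

lemma IsDensityMatrix.mixedUnitary {ι : Type*} [Fintype ι] {p : ι → ℝ} {U : ι → Matrix n n ℂ}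
    (hp₀ : ∀ i, 0 ≤ p i) (hp₁ : ∑ i, p i = 1) (hU : ∀ i, U i ∈ unitaryGroup n ℂ)
    {A : Matrix n n ℂ} (hA : A.IsDensityMatrix) : (mixedUnitary p U A).IsDensityMatrix := by
  refine ⟨Finset.sum_nonneg fun i _ => smul_nonneg (hp₀ i) (hA.unitary_conj (hU i)).1, ?_⟩
  simp only [Matrix.mixedUnitary, trace_sum, trace_smul, (hA.unitary_conj (hU _)).2,
    ← Finset.sum_smul, hp₁, one_smul]

lemma isDensityMatrix_and_exists_smul_le_of_mixedUnitary {N : ℕ} {ι : Fin N → Type*}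
    [∀ k, Fintype (ι k)] {p : ∀ k, ι k → ℝ} {U : ∀ k, ι k → Matrix n n ℂ} (o : ∀ k, ι k) {r : ℝ}
    (hr : 0 ≤ r) (hp₀ : ∀ k i, 0 ≤ p k i) (hp₁ : ∀ k, ∑ i, p k i = 1)
    (hpo : ∀ k, r ≤ p k (o k)) (hU : ∀ k i, U k i ∈ unitaryGroup n ℂ) {ρ σ : ℕ → Matrix n n ℂ}
    (hρ₀ : (ρ 0).IsDensityMatrix) (hσ₀ : σ 0 = ρ 0)
    (hρ : ∀ k : Fin N, ρ (k + 1) = mixedUnitary (p k) (U k) (ρ k))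
    (hσ : ∀ k : Fin N, σ (k + 1) = U k (o k) * σ k * (U k (o k))ᴴ) :
    (ρ N).IsDensityMatrix ∧ (σ N).IsDensityMatrix ∧ ∃ c, r ^ N ≤ c ∧ c • σ N ≤ ρ N := by
  refine Fin.induction (motive := fun k => (ρ k).IsDensityMatrix ∧ (σ k).IsDensityMatrix ∧
    ∃ c, r ^ (k : ℕ) ≤ c ∧ c • σ k ≤ ρ k) ?_ ?_ (Fin.last N)
  · exact ⟨hρ₀, hσ₀ ▸ hρ₀, 1, by simp [hσ₀]⟩
  · rintro k ⟨hρk, hσk, c, hc, hle⟩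
    refine ⟨?_, ?_, c * p k (o k), ?_, ?_⟩
    · exact (hρ k).symm ▸ hρk.mixedUnitary (hp₀ k) (hp₁ k) (hU k)
    · exact (hσ k).symm ▸ hσk.unitary_conj (hU k (o k))
    · rw [Fin.val_succ, pow_succ]
      exact mul_le_mul hc (hpo k) hr ((pow_nonneg hr _).trans hc)
    · simpa only [Fin.val_succ, Fin.val_castSucc, hρ, hσ] using
        smul_le_mixedUnitary_of_smul_le (hp₀ k) hρk.1 hle (o k)

lemma IsHermitian.le_one_iff {M : Matrix n n ℂ} (hM : M.IsHermitian) :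
    M ≤ 1 ↔ ∀ i, hM.eigenvalues i ≤ 1 := by
  rw [CFC.le_one_iff (R := ℝ) M hM.isSelfAdjoint, hM.spectrum_real_eq_range_eigenvalues,
    Set.forall_mem_range]

lemma IsHermitian.neg_one_le_iff {M : Matrix n n ℂ} (hM : M.IsHermitian) :
    -1 ≤ M ↔ ∀ i, -1 ≤ hM.eigenvalues i := by
  rw [← Set.forall_mem_range (p := (-1 ≤ ·)), ← hM.spectrum_real_eq_range_eigenvalues,
    ← algebraMap_le_iff_le_spectrum hM.isSelfAdjoint, map_neg, map_one]

lemma norm_trace_mul_le_re_trace {M A : Matrix n n ℂ} (hM₁ : -1 ≤ M) (hM₂ : M ≤ 1)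
    (hA : 0 ≤ A) : ‖(M * A).trace‖ ≤ A.trace.re := by
  set s := CFC.sqrt A
  have hs : IsSelfAdjoint s := (CFC.sqrt_nonneg A).isSelfAdjoint
  have hss : s * s = A := CFC.sqrt_mul_sqrt_self A hA
  have hconj : ∀ X : Matrix n n ℂ, (s * X * s).trace = (X * A).trace := fun X => by
    rw [trace_mul_comm, ← mul_assoc, hss, trace_mul_comm]
  refine Complex.norm_le_re_of_neg_le_of_le ?_ ?_
  · simpa [hconj, hss] using trace_mono (hs.conjugate_le_conjugate hM₁)
  · simpa [hconj, hss] using trace_mono (hs.conjugate_le_conjugate hM₂)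

lemma norm_trace_mul_sub_le {M ρ σ : Matrix n n ℂ} (hM₁ : -1 ≤ M) (hM₂ : M ≤ 1)
    (hρ : ρ.trace = 1) (hσ : σ.IsDensityMatrix) {c : ℝ} (hle : c • σ ≤ ρ) :
    ‖(M * ρ).trace - (M * σ).trace‖ ≤ 2 * (1 - c) := by
  have hDtr : (ρ - c • σ).trace = (1 - c : ℝ) := by
    simp [trace_sub, trace_smul, hρ, hσ.2]
  have hc : c ≤ 1 := by
    have := (le_iff.1 hle).trace_nonneg
    rw [hDtr, Complex.zero_le_real] at this
    linarith
  have hσM : ‖(M * σ).trace‖ ≤ 1 := by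
    simpa [hσ.2] using norm_trace_mul_le_re_trace hM₁ hM₂ hσ.1
  have hDM : ‖(M * (ρ - c • σ)).trace‖ ≤ 1 - c := by
    simpa [hDtr] using norm_trace_mul_le_re_trace hM₁ hM₂ (sub_nonneg.2 hle)
  calc ‖(M * ρ).trace - (M * σ).trace‖
      = ‖(M * (ρ - c • σ)).trace - ((1 - c : ℝ) : ℂ) * (M * σ).trace‖ := by
        congr 1
        simp only [mul_sub, mul_smul_comm, trace_sub, trace_smul, Complex.real_smul]
        push_cast; ring
    _ ≤ ‖(M * (ρ - c • σ)).trace‖ + |1 - c| * ‖(M * σ).trace‖ := by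
        grw [norm_sub_le, norm_mul, Complex.norm_real, Real.norm_eq_abs]
    _ ≤ (1 - c) + (1 - c) * 1 := by
        rw [abs_of_nonneg (sub_nonneg.2 hc)]
        gcongr
    _ = 2 * (1 - c) := by ring

end Matrix

lemma two_mul_one_sub_one_sub_pow_le {ε : ℝ} (hε : ε ≤ 2) (N : ℕ) :
    2 * (1 - (1 - ε) ^ N) ≤ 2 * ε * N := by
  have := one_add_mul_le_pow (a := -ε) (by linarith) N
  rw [← sub_eq_add_neg] at this
  linarith

theorem stmt3_general (d N : ℕ) (ε : ℝ) (hε1 : ε ≤ 1)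
    (M : Matrix (Fin d) (Fin d) ℂ) (hM : M.IsHermitian)
    (hMeig : ∀ i, hM.eigenvalues i ∈ Set.Icc (-1 : ℝ) 1)
    (ρ₀ : Matrix (Fin d) (Fin d) ℂ) (hρ₀ : ρ₀.PosSemidef) (hρ₀tr : ρ₀.trace = 1)
    (G : Fin N → Matrix (Fin d) (Fin d) ℂ)
    (hG : ∀ k, G k ∈ Matrix.unitaryGroup (Fin d) ℂ)
    (ι : Fin N → Type) [∀ k, Fintype (ι k)]
    (o : ∀ k, ι k)
    (p : ∀ k, ι k → ℝ)
    (hp0 : ∀ k i, 0 ≤ p k i) (hp1 : ∀ k, ∑ i, p k i = 1)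
    (hpo : ∀ k, 1 - ε ≤ p k (o k))
    (S : ∀ k, ι k → Matrix (Fin d) (Fin d) ℂ)
    (hS : ∀ k i, S k i ∈ Matrix.unitaryGroup (Fin d) ℂ)
    (hSo : ∀ k, S k (o k) = 1)
    (ρ : ℕ → Matrix (Fin d) (Fin d) ℂ) (hρ0 : ρ 0 = ρ₀)
    (hρ : ∀ k : Fin N,
      ρ (k + 1) = ∑ i, (p k i : ℂ) • (S k i * G k * ρ k * (G k)ᴴ * (S k i)ᴴ))
    (ρt : ℕ → Matrix (Fin d) (Fin d) ℂ) (hρt0 : ρt 0 = ρ₀)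
    (hρt : ∀ k : Fin N, ρt (k + 1) = G k * ρt k * (G k)ᴴ) :
    ‖(M * ρ N).trace - (M * ρt N).trace‖ ≤ 2 * (1 - (1 - ε) ^ N) ∧
      2 * (1 - (1 - ε) ^ N) ≤ 2 * ε * N := by
  set U : ∀ k, ι k → Matrix (Fin d) (Fin d) ℂ := fun k i => S k i * G k
  have hU : ∀ k i, U k i ∈ unitaryGroup (Fin d) ℂ := fun k i => mul_mem (hS k i) (hG k)
  have hρU : ∀ k : Fin N, ρ (k + 1) = mixedUnitary (p k) (U k) (ρ k) := fun k => by
    simp only [hρ, mixedUnitary, U, conjTranspose_mul, Complex.coe_smul, mul_assoc]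
  have hρtU : ∀ k : Fin N, ρt (k + 1) = U k (o k) * ρt k * (U k (o k))ᴴ := fun k => by
    simp only [hρt, U, hSo, one_mul]
  obtain ⟨hρN, hρtN, c, hc, hle⟩ := isDensityMatrix_and_exists_smul_le_of_mixedUnitary o
    (by linarith) hp0 hp1 hpo hU (hρ0 ▸ ⟨hρ₀.nonneg, hρ₀tr⟩) (hρt0.trans hρ0.symm) hρU hρtU
  have hM₁ : -1 ≤ M := hM.neg_one_le_iff.2 fun i => (hMeig i).1
  have hM₂ : M ≤ 1 := hM.le_one_iff.2 fun i => (hMeig i).2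
  exact ⟨(norm_trace_mul_sub_le hM₁ hM₂ hρN.2 hρtN hle).trans (by linarith),
    two_mul_one_sub_one_sub_pow_le (by linarith) N⟩

/-- Proposition 2: without QEM, the computational error of a circuit of `N`
imperfect gates, each a probabilistic mixture of unitary errors with identity probability
at least `1 - ε`, satisfies `|Tr(M ρ_N) - Tr(M ρ̃_N)| ≤ 2(1 - (1-ε)^N) ≤ 2εN`. -/
theorem stmt3 (d N : ℕ) (hd : 0 < d) (ε : ℝ) (hε0 : 0 ≤ ε) (hε1 : ε ≤ 1)
    (M : Matrix (Fin d) (Fin d) ℂ) (hM : M.IsHermitian)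
    (hMeig : ∀ i, hM.eigenvalues i ∈ Set.Icc (-1 : ℝ) 1)
    (ρ₀ : Matrix (Fin d) (Fin d) ℂ) (hρ₀ : ρ₀.PosSemidef) (hρ₀tr : ρ₀.trace = 1)
    (G : Fin N → Matrix (Fin d) (Fin d) ℂ)
    (hG : ∀ k, G k ∈ Matrix.unitaryGroup (Fin d) ℂ)
    (ι : Fin N → Type) [∀ k, Fintype (ι k)]
    (o : ∀ k, ι k)
    (p : ∀ k, ι k → ℝ)
    (hp0 : ∀ k i, 0 ≤ p k i) (hp1 : ∀ k, ∑ i, p k i = 1)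
    (hpo : ∀ k, 1 - ε ≤ p k (o k))
    (S : ∀ k, ι k → Matrix (Fin d) (Fin d) ℂ)
    (hS : ∀ k i, S k i ∈ Matrix.unitaryGroup (Fin d) ℂ)
    (hSo : ∀ k, S k (o k) = 1)
    (ρ : ℕ → Matrix (Fin d) (Fin d) ℂ) (hρ0 : ρ 0 = ρ₀)
    (hρ : ∀ k : Fin N,
      ρ (k + 1) = ∑ i, (p k i : ℂ) • (S k i * G k * ρ k * (G k)ᴴ * (S k i)ᴴ))
    (ρt : ℕ → Matrix (Fin d) (Fin d) ℂ) (hρt0 : ρt 0 = ρ₀)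
    (hρt : ∀ k : Fin N, ρt (k + 1) = G k * ρt k * (G k)ᴴ) :
    ‖(M * ρ N).trace - (M * ρt N).trace‖ ≤ 2 * (1 - (1 - ε) ^ N) ∧
      2 * (1 - (1 - ε) ^ N) ≤ 2 * ε * N :=
  stmt3_general d N ε hε1 M hM hMeig ρ₀ hρ₀ hρ₀tr G hG ι o p hp0 hp1 hpo S hS hSo ρ hρ0 hρ ρt hρt0
    hρt
end

section
/- Let d, N be natural numbers and ξ ≥ 0 a real number. On a probability space let c₁,…,c_N be mutually independent square-integrable random vectors in ℝ^d satisfying, for every k and all coordinates i, j: E[c_k(i)] = 1 and |E[c_k(i) c_k(j)] − 1| ≤ ξ. Let G₁,…,G_N be d×d real orthogonal matrices and v₀ ∈ ℝ^d a vector with ‖v₀‖ = 1. Define the random vectors V₀ = v₀ and V_k = diag(c_k) · G_k · V_{k−1} for k = 1,…,N, and let μ = G_N ⋯ G₁ v₀. Then for every w ∈ ℝ^d, E[(wᵀ V_N − wᵀ μ)²] ≤ ‖w‖² (exp(N ξ) − 1). -/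
open scoped BigOperators
open Matrix MeasureTheory ProbabilityTheory

/-- Euclidean norm of a real vector. -/
noncomputable def enorm₂ {ι : Type*} [Fintype ι] (v : ι → ℝ) : ℝ :=
  Real.sqrt (∑ i, v i ^ 2)

/-! Each state `V k` is measurable with respect to `σ(c j : j < k)`, hence independent of `c k`.
Independence factorises the moments of every step: the mean of `V (k + 1)` is `G k` applied to the
mean of `V k`, so `E[V N] = μN`; and as `G k` preserves the Euclidean norm,
`E‖V (k+1)‖² = ∑ i, E[c k i ²] E[(G k V k) i ²] ≤ (1 + ξ) E‖V k‖²`. Hence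
`E‖V N - μN‖² = E‖V N‖² - ‖μN‖² ≤ (1 + ξ) ^ N - 1 ≤ exp (N ξ) - 1`, and Cauchy–Schwarz bounds
`(wᵀ (V N - μN))²` by `‖w‖² ‖V N - μN‖²`. -/

lemma enorm₂_sq {ι : Type*} [Fintype ι] (v : ι → ℝ) : enorm₂ v ^ 2 = ∑ i, v i ^ 2 :=
  Real.sq_sqrt (Finset.sum_nonneg fun i _ => sq_nonneg (v i))

lemma Matrix.sum_sq_mulVec_of_mem_orthogonalGroup {ι : Type*} [Fintype ι] [DecidableEq ι]
    {A : Matrix ι ι ℝ} (hA : A ∈ orthogonalGroup ι ℝ) (v : ι → ℝ) :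
    ∑ i, (A *ᵥ v) i ^ 2 = ∑ i, v i ^ 2 := by
  have hAA : Aᵀ * A = 1 := hA.1
  have : A *ᵥ v ⬝ᵥ A *ᵥ v = v ⬝ᵥ v := by
    rw [dotProduct_mulVec, ← vecMul_transpose, vecMul_vecMul, hAA, vecMul_one]
  simpa only [dotProduct, sq] using this

lemma List.prod_reverse_take_ofFn_succ {M : Type*} [Monoid M] {N : ℕ} (G : Fin N → M)
    {k : ℕ} (hk : k < N) :
    ((List.ofFn G).take (k + 1)).reverse.prod =
      G ⟨k, hk⟩ * ((List.ofFn G).take k).reverse.prod := by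
  rw [List.take_add_one, List.getElem?_eq_getElem (by simpa using hk)]
  simp

lemma Real.one_add_pow_le_exp_mul {x : ℝ} (hx : 0 ≤ 1 + x) (n : ℕ) :
    (1 + x) ^ n ≤ Real.exp (n * x) := by
  rw [Real.exp_nat_mul]
  exact pow_le_pow_left₀ hx (by linarith [Real.add_one_le_exp x]) n

namespace ProbabilityTheory

variable {Ω : Type*} [MeasurableSpace Ω] {μ : Measure Ω}

lemma IndepFun.memLp_two_mul {X Y : Ω → ℝ} (hXY : IndepFun X Y μ) (hX : MemLp X 2 μ)
    (hY : MemLp Y 2 μ) : MemLp (X * Y) 2 μ := by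
  rw [memLp_two_iff_integrable_sq (hX.1.mul hY.1)]
  have hXY2 : IndepFun (fun ω => X ω ^ 2) (fun ω => Y ω ^ 2) μ :=
    hXY.comp (measurable_id.pow_const 2) (measurable_id.pow_const 2)
  simp only [Pi.mul_apply, mul_pow]
  exact hXY2.integrable_mul hX.integrable_sq hY.integrable_sq

lemma iIndepFun.indepFun_of_measurable_iSup {ι γ : Type*} {β : ι → Type*}
    [mβ : ∀ i, MeasurableSpace (β i)] [MeasurableSpace γ] {f : ∀ i, Ω → β i}
    (hf : iIndepFun f μ) (hf_meas : ∀ i, AEMeasurable (f i) μ) {T : Finset ι} {k : ι}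
    (hk : k ∉ T) {g : Ω → γ}
    (hg : Measurable[⨆ j ∈ T, (mβ j).comap (f j)] g) : IndepFun (f k) g μ := by
  have hST := hf.indepFun_finset₀ {k} T (Finset.disjoint_singleton_left.2 hk) hf_meas
  rw [IndepFun_iff_Indep] at hST ⊢
  have hle : ∀ (S : Finset ι) j, j ∈ S →
      (mβ j).comap (f j) ≤ MeasurableSpace.comap (fun ω (i : S) => f i ω) MeasurableSpace.pi :=
    fun S j hj => Measurable.comap_le (β := β j)
      ((measurable_pi_apply (⟨j, hj⟩ : S)).comp (comap_measurable (fun ω (i : S) => f i ω)))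
  exact indep_of_indep_of_le_left (indep_of_indep_of_le_right hST
    (hg.comap_le.trans (iSup₂_le (hle T)))) (hle _ k (Finset.mem_singleton_self k))

section Coordinatewise

variable {ι : Type*} {X Y : Ω → ι → ℝ}

lemma IndepFun.memLp_two_mul_apply (hXY : IndepFun X Y μ) (hX : ∀ i, MemLp (X · i) 2 μ)
    (hY : ∀ i, MemLp (Y · i) 2 μ) (i : ι) : MemLp (fun ω => (X ω * Y ω) i) 2 μ :=
  (hXY.comp (measurable_pi_apply i) (measurable_pi_apply i)).memLp_two_mul (hX i) (hY i)

lemma IndepFun.integral_mul_apply (hXY : IndepFun X Y μ)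
    (hX : ∀ i, AEStronglyMeasurable (X · i) μ) (hY : ∀ i, AEStronglyMeasurable (Y · i) μ)
    (i : ι) : ∫ ω, (X ω * Y ω) i ∂μ = (∫ ω, X ω i ∂μ) * ∫ ω, Y ω i ∂μ :=
  (hXY.comp (measurable_pi_apply i) (measurable_pi_apply i)).integral_fun_mul_eq_mul_integral
    (hX i) (hY i)

lemma IndepFun.integral_sum_sq_mul_le [Fintype ι] (hXY : IndepFun X Y μ)
    (hX : ∀ i, MemLp (X · i) 2 μ) (hY : ∀ i, MemLp (Y · i) 2 μ) {s : ℝ}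
    (hs : ∀ i, ∫ ω, X ω i ^ 2 ∂μ ≤ s) :
    ∫ ω, ∑ i, (X ω * Y ω) i ^ 2 ∂μ ≤ s * ∫ ω, ∑ i, Y ω i ^ 2 ∂μ := by
  have hYsq : ∀ i, Integrable (fun ω => Y ω i ^ 2) μ := fun i => (hY i).integrable_sq
  have hXYsq : ∀ i, Integrable (fun ω => (X ω * Y ω) i ^ 2) μ := fun i =>
    (hXY.memLp_two_mul_apply hX hY i).integrable_sq
  have hfactor : ∀ i, ∫ ω, (X ω * Y ω) i ^ 2 ∂μ = (∫ ω, X ω i ^ 2 ∂μ) * ∫ ω, Y ω i ^ 2 ∂μ := by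
    intro i
    simp only [Pi.mul_apply, mul_pow]
    exact ((hXY.comp (measurable_pi_apply i) (measurable_pi_apply i)).comp
      (measurable_id.pow_const 2) (measurable_id.pow_const 2)).integral_fun_mul_eq_mul_integral
      ((hX i).1.pow 2) ((hY i).1.pow 2)
  calc ∫ ω, ∑ i, (X ω * Y ω) i ^ 2 ∂μ
      = ∑ i, (∫ ω, X ω i ^ 2 ∂μ) * ∫ ω, Y ω i ^ 2 ∂μ := by
        rw [integral_finsetSum _ fun i _ => hXYsq i]
        exact Finset.sum_congr rfl fun i _ => hfactor i
    _ ≤ ∑ i, s * ∫ ω, Y ω i ^ 2 ∂μ :=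
        Finset.sum_le_sum fun i _ => mul_le_mul_of_nonneg_right (hs i)
          (integral_nonneg fun ω => sq_nonneg _)
    _ = s * ∫ ω, ∑ i, Y ω i ^ 2 ∂μ := by
        rw [← Finset.mul_sum, integral_finsetSum _ fun i _ => hYsq i]

end Coordinatewise

end ProbabilityTheory

namespace MeasureTheory

variable {Ω ι : Type*} [MeasurableSpace Ω] {μ : Measure Ω} [Fintype ι] {V : Ω → ι → ℝ}

lemma memLp_mulVec_apply {p : ENNReal} (A : Matrix ι ι ℝ) (hV : ∀ i, MemLp (V · i) p μ)
    (i : ι) : MemLp (fun ω => (A *ᵥ V ω) i) p μ :=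
  memLp_finsetSum _ fun j _ => (hV j).const_mul (A i j)

lemma integral_mulVec_apply (A : Matrix ι ι ℝ) (hV : ∀ i, Integrable (V · i) μ) (i : ι) :
    ∫ ω, (A *ᵥ V ω) i ∂μ = (A *ᵥ fun j => ∫ ω, V ω j ∂μ) i := by
  simp only [mulVec, dotProduct]
  rw [integral_finsetSum _ fun j _ => (hV j).const_mul (A i j)]
  simp only [integral_const_mul]

lemma integral_sq_dotProduct_sub_le [IsProbabilityMeasure μ] (hV : ∀ i, MemLp (V · i) 2 μ)
    {m : ι → ℝ} (hm : ∀ i, ∫ ω, V ω i ∂μ = m i) (w : ι → ℝ) :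
    ∫ ω, (w ⬝ᵥ V ω - w ⬝ᵥ m) ^ 2 ∂μ
      ≤ (∑ i, w i ^ 2) * ((∫ ω, ∑ i, V ω i ^ 2 ∂μ) - ∑ i, m i ^ 2) := by
  have hdev : ∀ i, Integrable (fun ω => (V ω i - m i) ^ 2) μ := fun i =>
    ((hV i).sub (memLp_const (m i))).integrable_sq
  have hsq : ∀ i, Integrable (fun ω => V ω i ^ 2) μ := fun i => (hV i).integrable_sq
  have hvar : ∀ i, ∫ ω, (V ω i - m i) ^ 2 ∂μ = ∫ ω, V ω i ^ 2 ∂μ - m i ^ 2 := by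
    intro i
    rw [← hm i, ← variance_eq_integral (hV i).aemeasurable, variance_eq_sub (hV i)]
    rfl
  have hcs : ∀ ω, (w ⬝ᵥ V ω - w ⬝ᵥ m) ^ 2 ≤ (∑ i, w i ^ 2) * ∑ i, (V ω i - m i) ^ 2 := by
    intro ω
    rw [← dotProduct_sub]
    exact Finset.sum_mul_sq_le_sq_mul_sq _ _ _
  calc ∫ ω, (w ⬝ᵥ V ω - w ⬝ᵥ m) ^ 2 ∂μ
      ≤ ∫ ω, (∑ i, w i ^ 2) * ∑ i, (V ω i - m i) ^ 2 ∂μ :=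
        integral_mono_of_nonneg (.of_forall fun ω => sq_nonneg _)
          ((integrable_finsetSum _ fun i _ => hdev i).const_mul _) (.of_forall hcs)
    _ = (∑ i, w i ^ 2) * ((∫ ω, ∑ i, V ω i ^ 2 ∂μ) - ∑ i, m i ^ 2) := by
        rw [integral_const_mul, integral_finsetSum _ fun i _ => hdev i,
          integral_finsetSum _ fun i _ => hsq i, ← Finset.sum_sub_distrib]
        simp only [hvar]

end MeasureTheory

namespace ProbabilityTheory

section RescaledWalk

variable {Ω ι : Type*} [Fintype ι] {N : ℕ} {c : Fin N → Ω → ι → ℝ} {G : Fin N → Matrix ι ι ℝ}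
  {v₀ : ι → ℝ} {V : ℕ → Ω → ι → ℝ}

abbrev pastSigmaAlgebra {β : Type*} [mβ : MeasurableSpace β] (c : Fin N → Ω → β) (k : ℕ) :
    MeasurableSpace Ω :=
  ⨆ j ∈ Finset.univ.filter (fun j : Fin N => (j : ℕ) < k), mβ.comap (c j)

lemma measurable_pastSigmaAlgebra_rescaledWalk (hV0 : ∀ ω, V 0 ω = v₀)
    (hV : ∀ k : Fin N, ∀ ω, V (k + 1) ω = c k ω * G k *ᵥ V k ω) :
    ∀ k ≤ N, Measurable[pastSigmaAlgebra c k] (V k) := by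
  intro k
  induction k with
  | zero =>
    intro _
    rw [funext hV0]
    exact measurable_const
  | succ k ih =>
    intro hk
    have hmono : pastSigmaAlgebra c k ≤ pastSigmaAlgebra c (k + 1) :=
      biSup_mono fun j hj => by
        simp only [Finset.mem_filter, Finset.mem_univ, true_and] at hj ⊢; omega
    have hc : Measurable[pastSigmaAlgebra c (k + 1)] (c ⟨k, hk⟩) :=
      (comap_measurable _).mono (le_iSup₂_of_le ⟨k, hk⟩ (by simp) le_rfl) le_rfl
    rw [funext (hV ⟨k, hk⟩)]
    exact hc.mul ((continuous_const.matrix_mulVec continuous_id).measurable.comp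
      ((ih (Nat.le_of_succ_le hk)).mono hmono le_rfl))

variable [MeasurableSpace Ω] {μ : Measure Ω}

lemma iIndepFun.indepFun_rescaledWalk (hindep : iIndepFun c μ)
    (hc : ∀ k, AEMeasurable (c k) μ) (hV0 : ∀ ω, V 0 ω = v₀)
    (hV : ∀ k : Fin N, ∀ ω, V (k + 1) ω = c k ω * G k *ᵥ V k ω) (k : Fin N) :
    IndepFun (c k) (V k) μ :=
  hindep.indepFun_of_measurable_iSup hc (by simp)
    (measurable_pastSigmaAlgebra_rescaledWalk hV0 hV k k.2.le)

lemma indepFun_mulVec_rescaledWalk (hind : ∀ k : Fin N, IndepFun (c k) (V k) μ) (k : Fin N) :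
    IndepFun (c k) (fun ω => G k *ᵥ V k ω) μ :=
  (hind k).comp measurable_id (continuous_const.matrix_mulVec continuous_id).measurable

variable [IsProbabilityMeasure μ]

lemma memLp_rescaledWalk (hc : ∀ k i, MemLp (c k · i) 2 μ)
    (hind : ∀ k : Fin N, IndepFun (c k) (V k) μ) (hV0 : ∀ ω, V 0 ω = v₀)
    (hV : ∀ k : Fin N, ∀ ω, V (k + 1) ω = c k ω * G k *ᵥ V k ω) :
    ∀ k ≤ N, ∀ i, MemLp (V k · i) 2 μ := by
  intro k
  induction k with
  | zero =>
    intro _ i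
    simp only [hV0]
    exact memLp_const _
  | succ k ih =>
    intro hk
    simp only [hV ⟨k, hk⟩]
    exact (indepFun_mulVec_rescaledWalk hind ⟨k, hk⟩).memLp_two_mul_apply (hc ⟨k, hk⟩)
      (memLp_mulVec_apply _ (ih (Nat.le_of_succ_le hk)))

lemma integral_rescaledWalk (hc : ∀ k i, MemLp (c k · i) 2 μ)
    (hmean : ∀ k i, ∫ ω, c k ω i ∂μ = 1) (hind : ∀ k : Fin N, IndepFun (c k) (V k) μ)
    (hV0 : ∀ ω, V 0 ω = v₀) (hV : ∀ k : Fin N, ∀ ω, V (k + 1) ω = c k ω * G k *ᵥ V k ω)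
    {m : ℕ → ι → ℝ} (hm0 : m 0 = v₀) (hm : ∀ k : Fin N, m (k + 1) = G k *ᵥ m k) :
    ∀ k ≤ N, ∀ i, ∫ ω, V k ω i ∂μ = m k i := by
  intro k
  induction k with
  | zero =>
    intro _ i
    simp [hV0, hm0]
  | succ k ih =>
    intro hk i
    have hVk := memLp_rescaledWalk hc hind hV0 hV k (Nat.le_of_succ_le hk)
    simp only [hV ⟨k, hk⟩]
    rw [(indepFun_mulVec_rescaledWalk hind ⟨k, hk⟩).integral_mul_apply
        (fun i => (hc ⟨k, hk⟩ i).1) (fun i => (memLp_mulVec_apply _ hVk i).1),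
      hmean, one_mul, integral_mulVec_apply _ fun j => (hVk j).integrable one_le_two,
      hm ⟨k, hk⟩]
    simp only [ih (Nat.le_of_succ_le hk)]

lemma integral_sum_sq_rescaledWalk_le [DecidableEq ι] (hc : ∀ k i, MemLp (c k · i) 2 μ)
    {s : ℝ} (hs : 0 ≤ s) (hc2 : ∀ k i, ∫ ω, c k ω i ^ 2 ∂μ ≤ s)
    (hG : ∀ k, G k ∈ orthogonalGroup ι ℝ)
    (hind : ∀ k : Fin N, IndepFun (c k) (V k) μ)
    (hV0 : ∀ ω, V 0 ω = v₀) (hV : ∀ k : Fin N, ∀ ω, V (k + 1) ω = c k ω * G k *ᵥ V k ω) :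
    ∀ k ≤ N, ∫ ω, ∑ i, V k ω i ^ 2 ∂μ ≤ s ^ k * ∑ i, v₀ i ^ 2 := by
  intro k
  induction k with
  | zero =>
    intro _
    simp [hV0]
  | succ k ih =>
    intro hk
    have hVk := memLp_rescaledWalk hc hind hV0 hV k (Nat.le_of_succ_le hk)
    simp only [hV ⟨k, hk⟩]
    calc ∫ ω, ∑ i, (c ⟨k, hk⟩ ω * G ⟨k, hk⟩ *ᵥ V k ω) i ^ 2 ∂μ
        ≤ s * ∫ ω, ∑ i, (G ⟨k, hk⟩ *ᵥ V k ω) i ^ 2 ∂μ :=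
          (indepFun_mulVec_rescaledWalk hind ⟨k, hk⟩).integral_sum_sq_mul_le (hc ⟨k, hk⟩)
            (memLp_mulVec_apply _ hVk) (hc2 ⟨k, hk⟩)
      _ = s * ∫ ω, ∑ i, V k ω i ^ 2 ∂μ := by
          simp only [sum_sq_mulVec_of_mem_orthogonalGroup (hG _)]
      _ ≤ s ^ (k + 1) * ∑ i, v₀ i ^ 2 := by
          rw [pow_succ', mul_assoc]
          exact mul_le_mul_of_nonneg_left (ih (Nat.le_of_succ_le hk)) hs

end RescaledWalk

end ProbabilityTheory

/-- core recursion of Proposition 3 for Pauli channels: under independent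
random diagonal rescalings `diag(c_k)` with unit means and second moments within `ξ` of `1`,
the mean-square error of `wᵀ V_N` about `wᵀ μ` is at most `‖w‖²(exp(Nξ) - 1)`. -/
theorem stmt5 (d N : ℕ) (ξ : ℝ) (hξ : 0 ≤ ξ)
    {Ω : Type*} [MeasurableSpace Ω] (μ : Measure Ω) [IsProbabilityMeasure μ]
    (c : Fin N → Ω → (Fin d → ℝ))
    (hindep : iIndepFun c μ)
    (hL2 : ∀ k i, MemLp (fun ω => c k ω i) 2 μ)
    (hmean : ∀ k i, ∫ ω, c k ω i ∂μ = 1)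
    (hsec : ∀ k i j, |(∫ ω, c k ω i * c k ω j ∂μ) - 1| ≤ ξ)
    (G : Fin N → Matrix (Fin d) (Fin d) ℝ)
    (hG : ∀ k, G k ∈ Matrix.orthogonalGroup (Fin d) ℝ)
    (v₀ : Fin d → ℝ) (hv₀ : enorm₂ v₀ = 1)
    (V : ℕ → Ω → (Fin d → ℝ)) (hV0 : ∀ ω, V 0 ω = v₀)
    (hV : ∀ k : Fin N, ∀ ω, V (k + 1) ω = fun i => c k ω i * (G k).mulVec (V k ω) i)
    (μN : Fin d → ℝ) (hμN : μN = (((List.ofFn G).reverse).prod).mulVec v₀) :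
    ∀ w : Fin d → ℝ,
      ∫ ω, (w ⬝ᵥ V N ω - w ⬝ᵥ μN) ^ 2 ∂μ ≤ enorm₂ w ^ 2 * (Real.exp (N * ξ) - 1) := by
  intro w
  have hv₀_sq : ∑ i, v₀ i ^ 2 = 1 := by rw [← enorm₂_sq, hv₀, one_pow]
  have hμN_sq : ∑ i, μN i ^ 2 = 1 := by
    rw [hμN, sum_sq_mulVec_of_mem_orthogonalGroup, hv₀_sq]
    exact list_prod_mem fun A hA => by
      obtain ⟨k, rfl⟩ := List.mem_ofFn.1 (List.mem_reverse.1 hA)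
      exact hG k
  have hind : ∀ k : Fin N, IndepFun (c k) (V k) μ := hindep.indepFun_rescaledWalk
    (fun k => aemeasurable_pi_lambda _ fun i => (hL2 k i).1.aemeasurable) hV0 hV
  have hmeanN : ∀ i, ∫ ω, V N ω i ∂μ = μN i := by
    have htake : (List.ofFn G).take N = List.ofFn G := List.take_of_length_le (by simp)
    simpa [hμN, htake] using integral_rescaledWalk hL2 hmean hind hV0 hV
      (m := fun k => ((List.ofFn G).take k).reverse.prod *ᵥ v₀) (by simp)
      (fun k => by simp [List.prod_reverse_take_ofFn_succ G k.2, mulVec_mulVec]) N le_rfl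
  have hsec_sq : ∀ k i, ∫ ω, c k ω i ^ 2 ∂μ ≤ 1 + ξ := fun k i => by
    simp only [sq]
    linarith [(abs_le.1 (hsec k i i)).2]
  have hmoment :=
    integral_sum_sq_rescaledWalk_le hL2 (by linarith) hsec_sq hG hind hV0 hV N le_rfl
  rw [hv₀_sq, mul_one] at hmoment
  calc ∫ ω, (w ⬝ᵥ V N ω - w ⬝ᵥ μN) ^ 2 ∂μ
      ≤ (∑ i, w i ^ 2) * ((∫ ω, ∑ i, V N ω i ^ 2 ∂μ) - ∑ i, μN i ^ 2) :=
        integral_sq_dotProduct_sub_le (memLp_rescaledWalk hL2 hind hV0 hV N le_rfl) hmeanN w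
    _ ≤ enorm₂ w ^ 2 * (Real.exp (N * ξ) - 1) := by
        rw [enorm₂_sq, hμN_sq]
        gcongr
        linarith [Real.one_add_pow_le_exp_mul (x := ξ) (by linarith) N]
end

section
/- Let σ ≥ 0 be a real number, L a positive natural number, and p ∈ ℝ^L a probability vector (p_i ≥ 0 for all i and Σ_i p_i = 1) satisfying p₁ ≥ 1/√(1+σ) and Σ_{i=2}^{L} p_i ≤ √(1+σ) − 1. Then the entrywise ℓ₁ norm of the matrix diag(p) − p pᵀ satisfies Σ_{i,j} |(diag(p) − p pᵀ)_{ij}| ≤ (5/2)σ + (1/4)σ². -/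
open scoped BigOperators
open Matrix

/-!
The diagonal entries `pᵢ(1 - pᵢ)` of `diag(p) - p pᵀ` are nonnegative and the off-diagonal ones
`-pᵢpⱼ` are nonpositive, so its entrywise ℓ₁ norm is `2 (1 - ∑ pᵢ²) ≤ 2 (1 - p₁²)`. The bound on
`p₁` gives `p₁² ≥ 1/(1+σ) ≥ 1 - σ`, hence the norm is at most `2σ`.
-/

section ProbabilityVector

variable {ι : Type*} [DecidableEq ι] {p : ι → ℝ}

lemma abs_diagonal_sub_vecMulVec_apply (hp0 : ∀ i, 0 ≤ p i) (hp1 : ∀ i, p i ≤ 1) (i j : ι) :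
    |(diagonal p - vecMulVec p p) i j| = p i * p j + diagonal (fun k ↦ p k - 2 * p k ^ 2) i j := by
  rcases eq_or_ne i j with rfl | hij
  · rw [Matrix.sub_apply, diagonal_apply_eq, diagonal_apply_eq, vecMulVec_apply,
      abs_of_nonneg (by nlinarith [hp0 i, hp1 i])]
    ring
  · rw [Matrix.sub_apply, diagonal_apply_ne _ hij, diagonal_apply_ne _ hij, vecMulVec_apply,
      abs_of_nonpos (by nlinarith [hp0 i, hp0 j])]
    ring

lemma sum_abs_diagonal_sub_vecMulVec [Fintype ι] (hp0 : ∀ i, 0 ≤ p i) (hp1 : ∑ i, p i = 1) :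
    ∑ i, ∑ j, |(diagonal p - vecMulVec p p) i j| = 2 * (1 - ∑ i, p i ^ 2) := by
  have hle : ∀ i, p i ≤ 1 := fun i ↦
    hp1 ▸ Finset.single_le_sum (fun j _ ↦ hp0 j) (Finset.mem_univ i)
  simp only [abs_diagonal_sub_vecMulVec_apply hp0 hle, Finset.sum_add_distrib, ← Finset.mul_sum,
    ← Finset.sum_mul, diagonal_apply, Finset.sum_ite_eq, Finset.mem_univ, if_true,
    Finset.sum_sub_distrib, hp1]
  ring

end ProbabilityVector

lemma one_sub_sq_le_of_inv_sqrt_le {σ a : ℝ} (hσ : 0 ≤ σ) (ha : 1 / √(1 + σ) ≤ a) :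
    1 - a ^ 2 ≤ σ := by
  have hsq : 1 / (1 + σ) ≤ a ^ 2 := by
    calc 1 / (1 + σ) = (1 / √(1 + σ)) ^ 2 := by rw [div_pow, one_pow, Real.sq_sqrt (by linarith)]
      _ ≤ a ^ 2 := pow_le_pow_left₀ (by positivity) ha 2
  have hinv : 1 - σ ≤ 1 / (1 + σ) := by
    rw [le_div_iff₀ (by linarith)]
    nlinarith
  linarith

theorem stmt8_general (σ : ℝ) (hσ : 0 ≤ σ) (L : ℕ) (hL : 0 < L)
    (p : Fin L → ℝ) (hp0 : ∀ i, 0 ≤ p i) (hp1 : ∑ i, p i = 1)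
    (hpfirst : 1 / Real.sqrt (1 + σ) ≤ p ⟨0, hL⟩) :
    ∑ i, ∑ j, |(Matrix.diagonal p - Matrix.vecMulVec p p) i j| ≤
      (5 / 2) * σ + (1 / 4) * σ ^ 2 := by
  rw [sum_abs_diagonal_sub_vecMulVec hp0 hp1]
  have hfirst : p ⟨0, hL⟩ ^ 2 ≤ ∑ i, p i ^ 2 :=
    Finset.single_le_sum (fun i _ ↦ sq_nonneg (p i)) (Finset.mem_univ _)
  have hdeficit := one_sub_sq_le_of_inv_sqrt_le hσ hpfirst
  linarith [sq_nonneg σ]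

/-- for a probability vector `p` with `p₁ ≥ 1/√(1+σ)` and
`∑_{i≥2} p_i ≤ √(1+σ) - 1`, the entrywise ℓ₁ norm of `diag(p) - p pᵀ` is at most
`(5/2)σ + (1/4)σ²`. -/
theorem stmt8 (σ : ℝ) (hσ : 0 ≤ σ) (L : ℕ) (hL : 0 < L)
    (p : Fin L → ℝ) (hp0 : ∀ i, 0 ≤ p i) (hp1 : ∑ i, p i = 1)
    (hpfirst : 1 / Real.sqrt (1 + σ) ≤ p ⟨0, hL⟩)
    (hprest : ∑ i ∈ Finset.univ.erase ⟨0, hL⟩, p i ≤ Real.sqrt (1 + σ) - 1) :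
    ∑ i, ∑ j, |(Matrix.diagonal p - Matrix.vecMulVec p p) i j| ≤
      (5 / 2) * σ + (1 / 4) * σ ^ 2 :=
  stmt8_general σ hσ L hL p hp0 hp1 hpfirst
end

section
/- Let d be a positive natural number, G a d×d real orthogonal matrix, A a d×d real symmetric positive semidefinite matrix, and Ξ any d×d real matrix. Then Tr(G A Gᵀ + Ξ ∘ (G A Gᵀ)) ≤ Tr(A) · (1 + ‖Ξ‖_max), where ∘ denotes the Hadamard (entrywise) product. -/
open scoped BigOperators
open Matrix

/-- The max norm of a real matrix: the largest absolute value of an entry. -/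
noncomputable def maxNorm {d : ℕ} (A : Matrix (Fin d) (Fin d) ℝ) : ℝ :=
  ⨆ i, ⨆ j, |A i j|

lemma abs_le_maxNorm {d : ℕ} (A : Matrix (Fin d) (Fin d) ℝ) (i j : Fin d) :
    |A i j| ≤ maxNorm A :=
  (le_ciSup (Set.finite_range fun j => |A i j|).bddAbove j).trans
    (le_ciSup (Set.finite_range fun i => ⨆ j, |A i j|).bddAbove i)

namespace Matrix

variable {n R : Type*} [Fintype n]

lemma trace_hadamard_le_mul_trace [Semiring R] [PartialOrder R] [IsOrderedRing R]
    {Ξ B : Matrix n n R} {c : R} (hΞ : ∀ i, Ξ i i ≤ c) (hB : ∀ i, 0 ≤ B i i) :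
    (Ξ ⊙ B).trace ≤ c * B.trace := by
  simp only [trace, diag, hadamard_apply, Finset.mul_sum]
  exact Finset.sum_le_sum fun i _ => mul_le_mul_of_nonneg_right (hΞ i) (hB i)

lemma trace_mul_mul_transpose_of_mem_orthogonalGroup [DecidableEq n] [CommRing R]
    {G : Matrix n n R} (hG : G ∈ orthogonalGroup n R) (A : Matrix n n R) :
    (G * A * Gᵀ).trace = A.trace := by
  rw [trace_mul_cycle, (mem_orthogonalGroup_iff' n R).mp hG, one_mul]

end Matrix

theorem stmt12_general (d : ℕ)
    (G : Matrix (Fin d) (Fin d) ℝ) (hG : G ∈ Matrix.orthogonalGroup (Fin d) ℝ)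
    (A : Matrix (Fin d) (Fin d) ℝ) (hA : A.PosSemidef)
    (Ξ : Matrix (Fin d) (Fin d) ℝ) :
    (G * A * Gᵀ + Matrix.hadamard Ξ (G * A * Gᵀ)).trace ≤ A.trace * (1 + maxNorm Ξ) := by
  have hB : (G * A * Gᵀ).PosSemidef := hA.mul_mul_conjTranspose_same G
  have hhad : (Ξ ⊙ (G * A * Gᵀ)).trace ≤ maxNorm Ξ * A.trace := by
    rw [← trace_mul_mul_transpose_of_mem_orthogonalGroup hG A]
    exact trace_hadamard_le_mul_trace
      (fun i => (le_abs_self _).trans (abs_le_maxNorm Ξ i i)) fun _ => hB.diag_nonneg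
  rw [trace_add, trace_mul_mul_transpose_of_mem_orthogonalGroup hG]
  linarith

/-- one-step trace recursion of Proposition 3: for orthogonal `G`,
symmetric positive semidefinite `A` and any `Ξ`,
`Tr(G A Gᵀ + Ξ ∘ (G A Gᵀ)) ≤ Tr(A)(1 + ‖Ξ‖_max)`. -/
theorem stmt12 (d : ℕ) (hd : 0 < d)
    (G : Matrix (Fin d) (Fin d) ℝ) (hG : G ∈ Matrix.orthogonalGroup (Fin d) ℝ)
    (A : Matrix (Fin d) (Fin d) ℝ) (hA : A.PosSemidef)
    (Ξ : Matrix (Fin d) (Fin d) ℝ) :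
    (G * A * Gᵀ + Matrix.hadamard Ξ (G * A * Gᵀ)).trace ≤ A.trace * (1 + maxNorm Ξ) :=
  stmt12_general d G hG A hA Ξ
end
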